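/- Let ℓ be an odd prime and n a positive integer. Then the rational number (2(ℓ+1)/B_{ℓ+1})·σ_ℓ(n) − 24·σ₁(n), where B_{ℓ+1} is the (ℓ+1)-st Bernoulli number, lies in ℓ·ℤ_(ℓ), where ℤ_(ℓ) is the localization of ℤ at the prime ℓ. Consequently, the n-th q-expansion coefficient of the normalized Eisenstein series E_{ℓ+1} is congruent modulo ℓ to the n-th q-expansion coefficient of E₂, i.e., E_{ℓ+1} ≡ E₂ (mod ℓ). -/

import Mathlib

/-- A rational number lies in `ℤ_(ℓ)`, the localization of `ℤ` at the prime `ℓ` (viewed as a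
subring of `ℚ`), iff its reduced denominator is not divisible by `ℓ`. -/
def IsEllIntegral (ℓ : ℕ) (r : ℚ) : Prop := ¬ (ℓ : ℕ) ∣ r.den

/-- A rational number lies in `ℓ·ℤ_(ℓ)` iff it is `ℓ` times an `ℓ`-integral rational. -/
def MemEllZLoc (ℓ : ℕ) (r : ℚ) : Prop := ∃ x : ℚ, IsEllIntegral ℓ x ∧ r = (ℓ : ℚ) * x

/-!
Split `2(ℓ+1)/B_{ℓ+1} · σ_ℓ(n) − 24 σ₁(n)` as
`(2(ℓ+1)/B_{ℓ+1} − 24) · σ_ℓ(n) + 24 (σ_ℓ(n) − σ₁(n))`. The second term is divisible by `ℓ` by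
Fermat's little theorem, so everything reduces to the Kummer-type congruence
`12 B_{ℓ+1} ≡ 1 (mod ℓ)` for `ℓ ≥ 5` (for `ℓ = 3`, `B_4 = -1/30` is checked directly).
Faulhaber's formula gives `ℓ B_{ℓ+1} ≡ ∑_{k<ℓ} k^{ℓ+1} (mod ℓ²)`, and Voronoi's congruence with
multiplier `2` evaluates this power sum to `ℓ/12` modulo `ℓ²`. Divisibility in `ℤ_(ℓ)` is
expressed through the `ℓ`-adic valuation on `ℚ`.
-/

open Finset
open scoped WithZero

section PowerSums

variable {R : Type*} [CommRing R]

theorem two_mul_sum_range_natCast (n : ℕ) : 2 * ∑ k ∈ range n, (k : R) = n * (n - 1) := by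
  induction n with
  | zero => simp
  | succ n ih => rw [sum_range_succ, mul_add, ih]; push_cast; ring

theorem eight_mul_sum_range_eq_one {h : ℕ} (hh : (2 * h + 1 : R) = 0) :
    8 * ∑ j ∈ range h, ((h : R) + 1 + j) = 1 := by
  rw [sum_add_distrib, sum_const, card_range, nsmul_eq_mul]
  linear_combination 4 * two_mul_sum_range_natCast (R := R) h + (6 * h - 1 : R) * hh

theorem six_mul_sum_range_natCast_sq (n : ℕ) :
    6 * ∑ k ∈ range n, (k : R) ^ 2 = n * (n - 1) * (2 * n - 1) := by
  induction n with
  | zero => simp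
  | succ n ih => rw [sum_range_succ, mul_add, ih]; push_cast; ring

theorem sum_range_two_mul_add_one {M : Type*} [AddCommMonoid M] (f : ℕ → M) (h : ℕ) :
    ∑ k ∈ range (2 * h + 1), f k =
      ∑ k ∈ range (h + 1), f (2 * k) + ∑ k ∈ range h, f (2 * k + 1) := by
  induction h with
  | zero => simp
  | succ h ih =>
    rw [show 2 * (h + 1) + 1 = 2 * h + 1 + 1 + 1 by ring, sum_range_succ, sum_range_succ, ih,
      sum_range_succ (fun k => f (2 * k)) (h + 1), sum_range_succ (fun k => f (2 * k + 1)) h,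
      show 2 * (h + 1) = 2 * h + 1 + 1 by ring]
    abel

/-- Voronoi's congruence for the multiplier `2`: doubling permutes the residues modulo `2h + 1`,
and reducing `2k` for `k > h` costs a first-order binomial term. -/
theorem sq_dvd_voronoi_two (h m : ℕ) :
    (2 * h + 1 : ℤ) ^ 2 ∣ (2 ^ (m + 1) - 1) * ∑ k ∈ range (2 * h + 1), (k : ℤ) ^ (m + 1) -
      (m + 1) * (2 * h + 1) * 2 ^ m * ∑ j ∈ range h, ((h : ℤ) + 1 + j) ^ m := by
  set n : ℤ := 2 * h + 1
  have hhalves : ∑ k ∈ range (2 * h + 1), (k : ℤ) ^ (m + 1) =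
      ∑ k ∈ range (h + 1), (k : ℤ) ^ (m + 1) + ∑ j ∈ range h, ((h : ℤ) + 1 + j) ^ (m + 1) := by
    rw [show 2 * h + 1 = (h + 1) + h by ring, sum_range_add]
    push_cast; rfl
  have hparity : ∑ k ∈ range (2 * h + 1), (k : ℤ) ^ (m + 1) =
      2 ^ (m + 1) * ∑ k ∈ range (h + 1), (k : ℤ) ^ (m + 1) +
        ∑ j ∈ range h, (2 * (j : ℤ) + 1) ^ (m + 1) := by
    rw [sum_range_two_mul_add_one, mul_sum]
    push_cast
    simp only [mul_pow]
  have hbinomial : n ^ 2 ∣ ∑ j ∈ range h, ((2 * (j : ℤ) + 1) ^ (m + 1) -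
      (2 ^ (m + 1) * ((h : ℤ) + 1 + j) ^ (m + 1) -
        (m + 1) * n * 2 ^ m * ((h : ℤ) + 1 + j) ^ m)) := by
    refine dvd_sum fun j _ => ?_
    have := sq_dvd_add_pow_sub_sub (-n) (2 * ((h : ℤ) + 1 + j)) (m + 1)
    rw [Nat.add_sub_cancel, mul_pow, mul_pow, neg_sq,
      show 2 * ((h : ℤ) + 1 + j) + -n = 2 * j + 1 by ring] at this
    convert this using 1
    push_cast
    ring
  rw [sum_sub_distrib, sum_sub_distrib, ← mul_sum, ← mul_sum] at hbinomial
  obtain ⟨c, hc⟩ := hbinomial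
  exact ⟨-c, by linear_combination (2 ^ (m + 1) : ℤ) * hhalves - hparity - hc⟩

end PowerSums

theorem natCast_dvd_sum_range_pow_succ {ℓ : ℕ} (hp : ℓ.Prime) (h2 : ℓ ≠ 2) (h3 : ℓ ≠ 3) :
    (ℓ : ℤ) ∣ ∑ k ∈ range ℓ, (k : ℤ) ^ (ℓ + 1) := by
  have : Fact ℓ.Prime := ⟨hp⟩
  have hsix : (6 : ZMod ℓ) ≠ 0 := by
    rw [show (6 : ZMod ℓ) = ((2 * 3 : ℕ) : ZMod ℓ) by norm_num, Ne, ZMod.natCast_eq_zero_iff,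
      hp.dvd_mul, Nat.prime_dvd_prime_iff_eq hp Nat.prime_two,
      Nat.prime_dvd_prime_iff_eq hp Nat.prime_three]
    tauto
  have hsq := six_mul_sum_range_natCast_sq (R := ZMod ℓ) ℓ
  rw [ZMod.natCast_self, zero_mul, zero_mul] at hsq
  simp only [sq] at hsq
  rw [← ZMod.intCast_zmod_eq_zero_iff_dvd]
  push_cast
  simp only [pow_succ, ZMod.pow_card]
  exact (mul_eq_zero.1 hsq).resolve_left hsix

theorem sq_dvd_twelve_mul_sum_range_pow_succ_sub {ℓ : ℕ} (hp : ℓ.Prime) (h2 : ℓ ≠ 2)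
    (h3 : ℓ ≠ 3) : (ℓ : ℤ) ^ 2 ∣ 12 * ∑ k ∈ range ℓ, (k : ℤ) ^ (ℓ + 1) - ℓ := by
  have : Fact ℓ.Prime := ⟨hp⟩
  obtain ⟨s, hs⟩ := natCast_dvd_sum_range_pow_succ hp h2 h3
  obtain ⟨h, rfl⟩ := hp.odd_of_ne_two h2
  set ℓ := 2 * h + 1
  set T := ∑ j ∈ range h, ((h : ℤ) + 1 + j) ^ ℓ
  have hℓ0 : (ℓ : ℤ) ≠ 0 := by positivity
  have hvoronoi : (ℓ : ℤ) ∣ (2 ^ (ℓ + 1) - 1) * s - (ℓ + 1) * 2 ^ ℓ * T := by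
    have hcast : (ℓ : ℤ) = 2 * h + 1 := by push_cast [ℓ]; rfl
    have := sq_dvd_voronoi_two h ℓ
    rw [hs, ← hcast, sq, show (2 ^ (ℓ + 1) - 1) * (ℓ * s) - (ℓ + 1) * ℓ * 2 ^ ℓ * T =
      (ℓ : ℤ) * ((2 ^ (ℓ + 1) - 1) * s - (ℓ + 1) * 2 ^ ℓ * T) by ring] at this
    exact (mul_dvd_mul_iff_left hℓ0).1 this
  have hℓ : (ℓ : ZMod ℓ) = 0 := ZMod.natCast_self ℓ
  have hT : (8 * T : ZMod ℓ) = 1 := by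
    push_cast [T]
    simp only [ZMod.pow_card]
    exact eight_mul_sum_range_eq_one (by exact_mod_cast hℓ)
  have hv : ((2 ^ (ℓ + 1) - 1) * s - (ℓ + 1) * 2 ^ ℓ * T : ZMod ℓ) = 0 := by
    exact_mod_cast (ZMod.intCast_zmod_eq_zero_iff_dvd _ _).2 hvoronoi
  rw [pow_succ, ZMod.pow_card, hℓ] at hv
  rw [hs, show 12 * (ℓ * s) - ℓ = (ℓ : ℤ) * (12 * s - 1) by ring, sq]
  refine mul_dvd_mul_left _ ((ZMod.intCast_zmod_eq_zero_iff_dvd _ _).1 ?_)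
  push_cast
  linear_combination 4 * hv + hT

section PadicValuation

variable {p : ℕ} [Fact p.Prime]

theorem padicValuation_intCast_le_one (x : ℤ) : Rat.padicValuation p x ≤ 1 := by
  rw [Rat.padicValuation_cast]
  exact Int.padicValuation_le_one p x

theorem padicValuation_natCast_le_one (n : ℕ) : Rat.padicValuation p n ≤ 1 := by
  exact_mod_cast padicValuation_intCast_le_one (n : ℤ)

theorem padicValuation_natCast_eq_one {n : ℕ} (h : ¬ p ∣ n) : Rat.padicValuation p n = 1 := by
  rw [← Int.cast_natCast, Rat.padicValuation_cast, Int.padicValuation_eq_one_iff]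
  exact_mod_cast h

theorem padicValuation_intCast_le_pow_of_dvd {x : ℤ} {k : ℕ} (h : (p : ℤ) ^ k ∣ x) :
    Rat.padicValuation p x ≤ Rat.padicValuation p p ^ k := by
  obtain ⟨y, rfl⟩ := h
  push_cast
  rw [map_mul, map_pow]
  exact mul_le_of_le_one_right' (padicValuation_intCast_le_one y)

theorem padicValuation_self_lt_one : Rat.padicValuation p p < 1 := by
  rw [← Int.cast_natCast, Rat.padicValuation_cast, Int.padicValuation_lt_one_iff]

theorem padicValuation_mul_le_of_le_one_left {a x : ℚ} {g : ℤᵐ⁰}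
    (ha : Rat.padicValuation p a ≤ 1) (hx : Rat.padicValuation p x ≤ g) :
    Rat.padicValuation p (a * x) ≤ g := by
  rw [map_mul]
  exact (mul_le_of_le_one_left' ha).trans hx

theorem memEllZLoc_of_padicValuation_le {r : ℚ}
    (h : Rat.padicValuation p r ≤ Rat.padicValuation p p) : MemEllZLoc p r := by
  have hp0 : (p : ℚ) ≠ 0 := by exact_mod_cast (Fact.out : p.Prime).ne_zero
  refine ⟨r / p, ?_, by field_simp⟩
  rw [IsEllIntegral, ← Rat.padicValuation_le_one_iff, map_div₀]
  exact div_le_one_of_le₀ h zero_le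

theorem padicValuation_natCast_div_prime_le_one {q : ℕ} (hq : q.Prime) :
    Rat.padicValuation p ((p : ℚ) / q) ≤ 1 := by
  rcases eq_or_ne q p with rfl | hqp
  · rw [div_self (by exact_mod_cast hq.ne_zero), map_one]
  · have hvq : Rat.padicValuation p q = 1 :=
      padicValuation_natCast_eq_one (by rwa [Nat.prime_dvd_prime_iff_eq Fact.out hq, eq_comm])
    rw [map_div₀, hvq, div_one]
    exact padicValuation_natCast_le_one p

theorem padicValuation_natCast_mul_bernoulli_le_one (n : ℕ) :
    Rat.padicValuation p (p * bernoulli n) ≤ 1 := by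
  obtain ⟨k, rfl | rfl⟩ := Nat.even_or_odd' n
  · obtain ⟨N, hN⟩ := Bernoulli.vonStaudt_clausen k
    rw [eq_sub_of_add_eq hN.symm, mul_sub, mul_sum]
    refine Valuation.map_sub_le _ (by exact_mod_cast padicValuation_intCast_le_one (p * N)) ?_
    refine Valuation.map_sum_le _ fun q hq => ?_
    rw [← mul_div_assoc, mul_one]
    exact padicValuation_natCast_div_prime_le_one (mem_filter.1 hq).2.1
  · rcases k with _ | k
    · rw [bernoulli_one, show (p : ℚ) * (-1 / 2) = -(p / (2 : ℕ)) by push_cast; ring,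
        Valuation.map_neg]
      exact padicValuation_natCast_div_prime_le_one Nat.prime_two
    · rw [bernoulli_eq_zero_of_odd (odd_two_mul_add_one _) (by omega), mul_zero, map_zero]
      exact zero_le

/-- Faulhaber's formula modulo `p²`: only the two top Bernoulli terms survive, and `B_{m-1} = 0`. -/
theorem padicValuation_sum_range_pow_sub_mul_bernoulli_le {m : ℕ} (hm : Even m) (hm4 : 4 ≤ m)
    (hpm : ¬ p ∣ m + 1) : Rat.padicValuation p (∑ k ∈ range p, (k : ℚ) ^ m - p * bernoulli m) ≤
      Rat.padicValuation p p ^ 2 := by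
  obtain ⟨j, rfl⟩ : ∃ j, m = j + 2 := ⟨m - 2, by omega⟩
  have hvanish : bernoulli (j + 1) = 0 :=
    bernoulli_eq_zero_of_odd (by simpa [Nat.even_add_one, parity_simps] using hm) (by omega)
  have hden : Rat.padicValuation p ((j + 2 : ℕ) + 1 : ℚ) = 1 := by
    exact_mod_cast padicValuation_natCast_eq_one hpm
  have htop : bernoulli (j + 2) * ((j + 2 + 1).choose (j + 2) : ℚ) *
      (p : ℚ) ^ (j + 2 + 1 - (j + 2)) / ((j + 2 : ℕ) + 1 : ℚ) = p * bernoulli (j + 2) := by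
    rw [Nat.choose_succ_self_right, Nat.add_sub_cancel_left, pow_one]
    push_cast
    field_simp
  rw [sum_range_pow, sum_range_succ, sum_range_succ, hvanish, htop, zero_mul, zero_mul, zero_div,
    add_zero, add_sub_cancel_right]
  refine Valuation.map_sum_le _ fun i hi => ?_
  have hi : i ≤ j := Nat.lt_succ_iff.1 (mem_range.1 hi)
  have hsplit : bernoulli i * ((j + 2 + 1).choose i : ℚ) * (p : ℚ) ^ (j + 2 + 1 - i) /
      ((j + 2 : ℕ) + 1 : ℚ) =
      (p * bernoulli i) * ((j + 2 + 1).choose i : ℚ) * (p : ℚ) ^ (j - i) * (p : ℚ) ^ 2 /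
        ((j + 2 : ℕ) + 1 : ℚ) := by
    rw [show j + 2 + 1 - i = 1 + (j - i) + 2 by omega, pow_add, pow_add, pow_one]
    ring
  rw [hsplit, map_div₀, hden, div_one, map_mul, map_mul, map_mul, map_pow, map_pow]
  calc _ ≤ 1 * 1 * 1 ^ (j - i) * Rat.padicValuation p p ^ 2 := by
        gcongr
        · exact padicValuation_natCast_mul_bernoulli_le_one i
        · exact padicValuation_natCast_le_one _
        · exact padicValuation_natCast_le_one p
    _ = Rat.padicValuation p p ^ 2 := by simp

theorem padicValuation_twelve_mul_bernoulli_sub_one_le (h2 : p ≠ 2) (h3 : p ≠ 3) :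
    Rat.padicValuation p (12 * bernoulli (p + 1) - 1) ≤ Rat.padicValuation p p := by
  have hp : p.Prime := Fact.out
  have hpow := padicValuation_intCast_le_pow_of_dvd
    (sq_dvd_twelve_mul_sum_range_pow_succ_sub hp h2 h3)
  push_cast at hpow
  have hfaulhaber := padicValuation_sum_range_pow_sub_mul_bernoulli_le (p := p) (m := p + 1)
    (hp.odd_of_ne_two h2).add_one (by have := hp.two_le; omega)
    fun h => h2 ((Nat.prime_dvd_prime_iff_eq hp Nat.prime_two).1 ((Nat.dvd_add_right dvd_rfl).1 h))
  have hv0 : 0 < Rat.padicValuation p p := by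
    rw [zero_lt_iff, Ne, Rat.padicValuation_eq_zero_iff]
    exact_mod_cast hp.ne_zero
  rw [← mul_le_mul_iff_right₀ hv0, ← map_mul, ← sq,
    show (p : ℚ) * (12 * bernoulli (p + 1) - 1) = (12 * ∑ k ∈ range p, (k : ℚ) ^ (p + 1) - p) -
      12 * (∑ k ∈ range p, (k : ℚ) ^ (p + 1) - p * bernoulli (p + 1)) by ring]
  exact Valuation.map_sub_le _ hpow
    (padicValuation_mul_le_of_le_one_left (by exact_mod_cast padicValuation_natCast_le_one 12)
      hfaulhaber)

theorem padicValuation_two_mul_succ_div_bernoulli_sub_le (h2 : p ≠ 2) :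
    Rat.padicValuation p (2 * (p + 1) / bernoulli (p + 1) - 24) ≤ Rat.padicValuation p p := by
  rcases eq_or_ne p 3 with rfl | h3
  · rw [bernoulli_eq_bernoulli'_of_ne_one (by norm_num), show 3 + 1 = 4 from rfl, bernoulli'_four]
    -- `2 · 4 / B₄ - 24 = -264 = 3 · (-88)`
    have := padicValuation_intCast_le_pow_of_dvd (p := 3) (x := -264) (k := 1) (by norm_num)
    norm_num at this ⊢
    exact this
  have hB := padicValuation_twelve_mul_bernoulli_sub_one_le h2 h3
  set B := bernoulli (p + 1)
  have h12B : Rat.padicValuation p (12 * B) = 1 := by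
    simpa using Valuation.map_one_add_of_lt _ (hB.trans_lt padicValuation_self_lt_one)
  have hB0 : B ≠ 0 := by rintro hB0; simp [hB0] at h12B
  rw [show 2 * ((p : ℚ) + 1) / B - 24 = 12 * (2 * p - 2 * (12 * B - 1)) / (12 * B) by
      field_simp; ring, map_div₀, h12B, div_one]
  have htwo : Rat.padicValuation p 2 ≤ 1 := by exact_mod_cast padicValuation_natCast_le_one 2
  exact padicValuation_mul_le_of_le_one_left (by exact_mod_cast padicValuation_natCast_le_one 12)
    (Valuation.map_sub_le _ (padicValuation_mul_le_of_le_one_left htwo le_rfl)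
      (padicValuation_mul_le_of_le_one_left htwo hB))

theorem padicValuation_sum_divisors_pow_sub_le (n : ℕ) :
    Rat.padicValuation p (∑ d ∈ n.divisors, (d : ℚ) ^ p - ∑ d ∈ n.divisors, (d : ℚ)) ≤
      Rat.padicValuation p p := by
  rw [← sum_sub_distrib]
  refine Valuation.map_sum_le _ fun d _ => ?_
  have hfermat : (p : ℤ) ^ 1 ∣ (d : ℤ) ^ p - d := by
    rw [pow_one, ← ZMod.intCast_zmod_eq_zero_iff_dvd]
    push_cast
    rw [ZMod.pow_card, sub_self]
  simpa using padicValuation_intCast_le_pow_of_dvd hfermat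

end PadicValuation

theorem eisenstein_weight_ell_add_one_congruent_E2_general
    (ℓ : ℕ) (hp : ℓ.Prime) (hodd : ℓ ≠ 2) (n : ℕ) :
    MemEllZLoc ℓ (2 * ((ℓ : ℚ) + 1) / bernoulli (ℓ + 1) *
        (∑ d ∈ n.divisors, (d : ℚ) ^ ℓ) -
      24 * (∑ d ∈ n.divisors, (d : ℚ) ^ 1)) := by
  have : Fact ℓ.Prime := ⟨hp⟩
  have hσ : Rat.padicValuation ℓ (∑ d ∈ n.divisors, (d : ℚ) ^ ℓ) ≤ 1 := by
    exact_mod_cast padicValuation_natCast_le_one (∑ d ∈ n.divisors, d ^ ℓ)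
  refine memEllZLoc_of_padicValuation_le ?_
  simp only [pow_one]
  rw [show ∀ a σℓ σ₁ : ℚ, a * σℓ - 24 * σ₁ = (a - 24) * σℓ + 24 * (σℓ - σ₁) by intros; ring]
  refine Valuation.map_add_le _ ?_ ?_
  · rw [map_mul]
    exact mul_le_of_le_of_le_one (padicValuation_two_mul_succ_div_bernoulli_sub_le hodd) hσ
  · exact padicValuation_mul_le_of_le_one_left (by exact_mod_cast padicValuation_natCast_le_one 24)
      (padicValuation_sum_divisors_pow_sub_le n)

/-- Let ℓ be an odd prime and `n` a positive integer. Then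
`(2(ℓ+1)/B_{ℓ+1})·σ_ℓ(n) − 24·σ₁(n)` lies in `ℓ·ℤ_(ℓ)`. Consequently the `n`-th q-expansion
coefficient of the normalized Eisenstein series `E_{ℓ+1}` is congruent modulo `ℓ` to that of
`E₂`, i.e. `E_{ℓ+1} ≡ E₂ (mod ℓ)`. -/
theorem eisenstein_weight_ell_add_one_congruent_E2
    (ℓ : ℕ) (hp : ℓ.Prime) (hodd : ℓ ≠ 2) (n : ℕ) (hn : 0 < n) :
    MemEllZLoc ℓ (2 * ((ℓ : ℚ) + 1) / bernoulli (ℓ + 1) *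
        (∑ d ∈ n.divisors, (d : ℚ) ^ ℓ) -
      24 * (∑ d ∈ n.divisors, (d : ℚ) ^ 1)) :=
  eisenstein_weight_ell_add_one_congruent_E2_general ℓ hp hodd n
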